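/- arXiv:1109.0331 — 3 statements merged into one kernel-verified Lean document; each statement's English description precedes it below -/
import Mathlib

section
/- Let d be an even positive integer. Then in the polynomial ring ℤ[t] one has the identity 4d · Σ_{i=0}^{d} N(d,i) · t^{2(d−i)} = d·(1+t²)²·(1+t⁴)^{(d−2)/2} + d·(1+t⁴)^{d/2} + 2·Σ_{k ∣ d} φ(d/k)·(1+t^{2d/k})^{k}. (This is the combinatorial content of the paper's closed formula for the Poincaré polynomial of Q̄₁(G(1,1),d) in the even case: the Poincaré polynomial equals Σ_{j=1}^{d} t^{2j} + Σ_{i=1}^{d} N(d,i) t^{2(d−i)}.) -/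
open Polynomial

/-- Two `i`-element subsets of `ZMod d` are related if some rotation `x ↦ x + a` or
reflection `x ↦ a - x` of `ZMod d` carries one onto the other.  Since these maps form a
group (the dihedral group of order `2d`), this is the orbit relation of the dihedral
action. -/
def neckRel (d i : ℕ) (S T : {S : Finset (ZMod d) // S.card = i}) : Prop :=
  ∃ a : ZMod d, (S.1.image fun x => x + a) = T.1 ∨ (S.1.image fun x => a - x) = T.1

/-- `neck d i = N(d,i)`: the number of necklaces of `i` black and `d - i` white beads,
i.e. the number of orbits of the dihedral group of order `2d` on `i`-element subsets of
`ZMod d`. -/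
noncomputable def neck (d i : ℕ) : ℕ := Nat.card (Quot (neckRel d i))


/-!
By Burnside's lemma for the dihedral group acting on the `i`-subsets of `ZMod d`, weighted by
`t ^ (2 (d - i))`, the left-hand side is twice the sum over all group elements `g` of the
generating function of the `g`-invariant subsets, and that generating function is
`∏ (1 + t ^ (2 |O|))` over the orbits `O` of `g`. A rotation by `a` has `d / ord a` orbits of
size `ord a`, and `φ m` rotations have order `m`. For even `d`, a reflection `x ↦ c - x` has two
fixed points and `(d - 2) / 2` orbits of size two when `c` is a double, which happens for half of
the `c`, and `d / 2` orbits of size two otherwise.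
-/

open Finset MulAction
open scoped Pointwise

section InvariantSubsets

variable {α β R : Type*} [DecidableEq α]

theorem iterate_mem_of_image_eq_self {σ : α → α} {S : Finset α} (hS : S.image σ = S) {a : α}
    (ha : a ∈ S) (n : ℕ) : σ^[n] a ∈ S := by
  induction n with
  | zero => exact ha
  | succ n ih => rw [Function.iterate_succ_apply', ← hS]; exact mem_image_of_mem σ ih

variable [Fintype α] [DecidableEq β] [CommSemiring R]

theorem prod_one_add_pow_card_fiber (π : α → β) (x : R) :
    ∏ b ∈ univ.image π, (1 + x ^ #{a | π a = b}) =
      ∑ T ∈ (univ.image π).powerset, x ^ #(univ.filter fun a => π a ∈ T)ᶜ := by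
  rw [prod_add]
  refine sum_congr rfl fun T _ => ?_
  rw [prod_const_one, one_mul, prod_pow_eq_pow_sum, compl_filter,
    card_eq_sum_card_fiberwise (f := π) (t := univ.image π \ T) fun a ha => by simpa using ha]
  refine congrArg _ (sum_congr rfl fun b hb => congrArg _ ?_)
  ext a
  simp only [mem_filter, mem_univ, true_and, iff_and_self]
  rintro rfl
  exact (mem_sdiff.1 hb).2

variable {σ : α → α} {π : α → β}

theorem filter_mem_image_eq_self (hπ : ∀ a b, π a = π b → ∃ n, σ^[n] a = b)
    {S : Finset α} (hS : S.image σ = S) : univ.filter (fun a => π a ∈ S.image π) = S := by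
  ext b
  simp only [mem_filter, mem_univ, true_and, mem_image]
  refine ⟨fun ⟨a, ha, hab⟩ => ?_, fun hb => ⟨b, hb, rfl⟩⟩
  obtain ⟨n, rfl⟩ := hπ a b hab
  exact iterate_mem_of_image_eq_self hS ha n

theorem image_filter_mem_eq_self (hσ : σ.Injective) (hπσ : ∀ a, π (σ a) = π a)
    (T : Finset β) :
    (univ.filter fun a => π a ∈ T).image σ = univ.filter fun a => π a ∈ T := by
  refine eq_of_subset_of_card_le (fun b hb => ?_) (card_image_of_injective _ hσ).ge
  obtain ⟨a, ha, rfl⟩ := mem_image.1 hb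
  simpa [hπσ] using ha

/-- The `σ`-invariant sets are exactly the unions of fibres of `π`; expanding the product
chooses the fibres left out. -/
theorem sum_image_eq_self_pow_card_compl (hσ : σ.Injective) (hπσ : ∀ a, π (σ a) = π a)
    (hπ : ∀ a b, π a = π b → ∃ n, σ^[n] a = b) (x : R) :
    ∑ S with S.image σ = S, x ^ #Sᶜ = ∏ b ∈ univ.image π, (1 + x ^ #{a | π a = b}) := by
  rw [prod_one_add_pow_card_fiber]
  refine sum_nbij' (fun S => S.image π) (fun T => univ.filter fun a => π a ∈ T) ?_ ?_ ?_ ?_ ?_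
  · intro S _
    simpa using image_subset_image (subset_univ S)
  · intro T _
    simpa using image_filter_mem_eq_self hσ hπσ T
  · intro S hS
    exact filter_mem_image_eq_self hπ (mem_filter.1 hS).2
  · intro T hT
    ext b
    simp only [mem_image, mem_filter, mem_univ, true_and]
    refine ⟨fun ⟨a, ha, hab⟩ => hab ▸ ha, fun hb => ?_⟩
    obtain ⟨a, -, rfl⟩ := mem_image.1 (mem_powerset.1 hT hb)
    exact ⟨a, hb, rfl⟩
  · intro S hS
    rw [filter_mem_image_eq_self hπ (mem_filter.1 hS).2]

end InvariantSubsets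

section Translations

variable {A R : Type*} [AddCommGroup A] [Fintype A] [CommSemiring R]

theorem card_fiber_mk'_zmultiples_eq_addOrderOf (t : A)
    [DecidableEq (A ⧸ AddSubgroup.zmultiples t)] (q : A ⧸ AddSubgroup.zmultiples t) :
    #{a | QuotientAddGroup.mk' (AddSubgroup.zmultiples t) a = q} = addOrderOf t := by
  classical
  obtain ⟨a₀, rfl⟩ := QuotientAddGroup.mk'_surjective (AddSubgroup.zmultiples t) q
  rw [AddMonoidHom.card_fiber_eq_of_mem_range _ ⟨a₀, rfl⟩ ⟨0, rfl⟩, map_zero]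
  simp only [QuotientAddGroup.mk'_apply, QuotientAddGroup.eq_zero_iff]
  rw [← Fintype.card_subtype, ← Nat.card_eq_fintype_card, ← Nat.card_zmultiples]

theorem sum_image_add_right_eq_self_pow_card_compl [DecidableEq A] (t : A) (x : R) :
    ∑ S with S.image (· + t) = S, x ^ #Sᶜ =
      (1 + x ^ addOrderOf t) ^ (Fintype.card A / addOrderOf t) := by
  classical
  set π := QuotientAddGroup.mk' (AddSubgroup.zmultiples t)
  have hπσ (a : A) : π (a + t) = π a := by simp [π]
  have hπ (a b : A) (hab : π a = π b) : ∃ n : ℕ, (· + t)^[n] a = b := by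
    obtain ⟨c, hc, hcb⟩ := (QuotientAddGroup.mk'_eq_mk' _).1 hab
    obtain ⟨n, hn⟩ := mem_multiples_iff_mem_zmultiples.2 hc
    exact ⟨n, by simp [hn, hcb]⟩
  have hcard := card_eq_sum_card_image π univ
  rw [sum_congr rfl fun q _ => card_fiber_mk'_zmultiples_eq_addOrderOf t q, sum_const,
    smul_eq_mul, card_univ] at hcard
  rw [sum_image_eq_self_pow_card_compl (add_left_injective t) hπσ hπ,
    prod_congr rfl fun q _ => by rw [card_fiber_mk'_zmultiples_eq_addOrderOf t q], prod_const,
    hcard, Nat.mul_div_cancel _ (addOrderOf_pos t)]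

end Translations

section Involutions

variable {α R : Type*} [DecidableEq α]

theorem Finset.card_pair_eq_one_iff {a b : α} : #{a, b} = 1 ↔ a = b := by
  grind [card_pair_eq_one_or_two, card_pair_eq_two_iff]

theorem Function.Involutive.mem_pair_iff {σ : α → α} (hσ : σ.Involutive) {a b : α} :
    b ∈ ({a, σ a} : Finset α) ↔ ({b, σ b} : Finset α) = {a, σ a} := by
  refine ⟨fun hb => ?_, fun hab => hab ▸ mem_insert_self b _⟩
  rcases mem_insert.1 hb with rfl | hb
  · rfl
  · rw [mem_singleton.1 hb, hσ a, pair_comm]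

variable [Fintype α] [CommSemiring R]

theorem card_image_pair_filter_card_eq_one (σ : α → α) :
    #{b ∈ univ.image fun a => ({a, σ a} : Finset α) | #b = 1} = #{a | σ a = a} := by
  rw [← card_image_of_injective (s := {a | σ a = a}) singleton_injective]
  refine congrArg card (ext fun b => ?_)
  simp only [mem_filter, mem_image, mem_univ, true_and]
  constructor
  · rintro ⟨⟨a, rfl⟩, h⟩
    rw [card_pair_eq_one_iff] at h
    exact ⟨a, h.symm, by simp [← h]⟩
  · rintro ⟨a, h, rfl⟩
    exact ⟨⟨a, by simp [h]⟩, card_singleton a⟩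

theorem Function.Involutive.sum_image_eq_self_pow_card_compl {σ : α → α} (hσ : σ.Involutive)
    (x : R) :
    ∑ S with S.image σ = S, x ^ #Sᶜ =
      (1 + x) ^ #{a | σ a = a} * (1 + x ^ 2) ^ ((Fintype.card α - #{a | σ a = a}) / 2) := by
  set π : α → Finset α := fun a => {a, σ a}
  set B := univ.image π
  have hπσ (a : α) : π (σ a) = π a :=
    hσ.mem_pair_iff.1 (mem_insert_of_mem (mem_singleton_self _))
  have hπ (a b : α) (hab : π a = π b) : ∃ n, σ^[n] a = b := by
    rcases mem_insert.1 (hσ.mem_pair_iff.2 hab.symm) with rfl | hb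
    · exact ⟨0, rfl⟩
    · exact ⟨1, (mem_singleton.1 hb).symm⟩
  have hfiber : ∀ b ∈ B, #{a | π a = b} = #b := by
    intro b hb
    obtain ⟨a, -, rfl⟩ := mem_image.1 hb
    exact congrArg card (ext fun c => by simp [π, hσ.mem_pair_iff])
  have hcard_two (b : Finset α) (hb : b ∈ B) (h1 : ¬#b = 1) : #b = 2 := by
    obtain ⟨a, -, rfl⟩ := mem_image.1 hb
    exact card_pair_eq_one_or_two.resolve_left h1
  have hsum : #{b ∈ B | #b = 1} + 2 * #{b ∈ B | ¬#b = 1} = Fintype.card α := by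
    rw [← card_univ, card_eq_sum_card_image π, sum_congr rfl hfiber,
      ← sum_filter_add_sum_filter_not B (#· = 1), sum_congr rfl fun b hb => (mem_filter.1 hb).2,
      sum_congr rfl fun b hb => hcard_two b (mem_filter.1 hb).1 (mem_filter.1 hb).2,
      sum_const, sum_const, smul_eq_mul, smul_eq_mul, mul_one, mul_comm]
  rw [_root_.sum_image_eq_self_pow_card_compl hσ.injective hπσ hπ,
    prod_congr rfl fun b hb => by rw [hfiber b hb], ← prod_filter_mul_prod_filter_not B (#· = 1),
    prod_eq_pow_card fun b hb => by rw [(mem_filter.1 hb).2, pow_one],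
    prod_eq_pow_card fun b hb => by rw [hcard_two b (mem_filter.1 hb).1 (mem_filter.1 hb).2],
    card_image_pair_filter_card_eq_one]
  rw [card_image_pair_filter_card_eq_one] at hsum
  congr 2
  omega

end Involutions

section Cyclic

variable {A : Type*} [Fintype A]

theorem IsAddCyclic.sum_comp_addOrderOf [AddGroup A] [IsAddCyclic A] {M : Type*}
    [AddCommMonoid M] (f : ℕ → M) :
    ∑ a : A, f (addOrderOf a) = ∑ m ∈ (Fintype.card A).divisors, Nat.totient m • f m := by
  rw [← sum_fiberwise_of_maps_to' (t := (Fintype.card A).divisors)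
    fun a _ => Nat.mem_divisors.2 ⟨addOrderOf_dvd_card, Fintype.card_ne_zero⟩]
  refine sum_congr rfl fun m hm => ?_
  rw [sum_const, IsAddCyclic.card_addOrderOf_eq_totient (Nat.dvd_of_mem_divisors hm)]

variable [DecidableEq A]

theorem IsAddCyclic.card_nsmul_eq_zero_of_dvd [AddGroup A] [IsAddCyclic A] {n : ℕ}
    (hn : n ∣ Fintype.card A) : #{a : A | n • a = 0} = n := by
  have hn0 : n ≠ 0 := by rintro rfl; exact Fintype.card_ne_zero (zero_dvd_iff.1 hn)
  rw [← sum_card_addOrderOf_eq_card_nsmul_eq_zero hn0, sum_congr rfl fun m hm =>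
      IsAddCyclic.card_addOrderOf_eq_totient ((Nat.dvd_of_mem_divisors hm).trans hn),
    Nat.sum_totient]

variable [AddCommGroup A] [IsAddCyclic A]

theorem IsAddCyclic.card_two_nsmul_eq_zero_or_two (h2 : 2 ∣ Fintype.card A) (c : A) :
    #{a : A | 2 • a = c} = 0 ∨ #{a : A | 2 • a = c} = 2 := by
  by_cases hc : ∃ a : A, 2 • a = c
  · exact Or.inr <| (AddMonoidHom.card_fiber_eq_of_mem_range (nsmulAddMonoidHom 2) hc
      ⟨0, nsmul_zero 2⟩).trans (card_nsmul_eq_zero_of_dvd h2)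
  · exact Or.inl <| card_eq_zero.2 <| filter_eq_empty_iff.2 fun a _ ha => hc ⟨a, ha⟩

theorem IsAddCyclic.sum_comp_card_two_nsmul_eq (h2 : 2 ∣ Fintype.card A) {M : Type*}
    [AddCommMonoid M] (f : ℕ → M) :
    ∑ c : A, f #{a : A | 2 • a = c} = (Fintype.card A / 2) • (f 2 + f 0) := by
  set F : A → ℕ := fun c => #{a : A | 2 • a = c}
  have hF (c : A) (hc : ¬F c = 2) : F c = 0 :=
    (card_two_nsmul_eq_zero_or_two h2 c).resolve_right hc
  have hsum : ∑ c, F c = Fintype.card A :=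
    (card_eq_sum_card_fiberwise (f := (2 • · : A → A)) fun _ _ => mem_univ _).symm
  rw [← sum_filter_add_sum_filter_not univ (F · = 2),
    sum_congr rfl fun c hc => (mem_filter.1 hc).2,
    sum_congr rfl fun c hc => hF c (mem_filter.1 hc).2,
    sum_const, sum_const_zero, smul_eq_mul, add_zero] at hsum
  rw [← sum_filter_add_sum_filter_not univ (F · = 2),
    sum_congr rfl fun c hc => congrArg f (mem_filter.1 hc).2,
    sum_congr rfl fun c hc => congrArg f (hF c (mem_filter.1 hc).2), sum_const, sum_const,
    filter_not, card_sdiff, card_univ, inter_univ, smul_add]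
  obtain ⟨k, hk⟩ := h2
  congr 2 <;> omega

end Cyclic

section Burnside

variable {G α R : Type*} [Group G] [Fintype G] [MulAction G α] [Fintype α] [DecidableEq α]

theorem card_orbits_powersetCard_mul_card (k : ℕ) :
    Nat.card (orbitRel.Quotient G (Set.powersetCard α k)) * Fintype.card G =
      ∑ g : G, #{S : Finset α | #S = k ∧ g • S = S} := by
  classical
  rw [Nat.card_eq_fintype_card, ← sum_card_fixedBy_eq_card_orbits_mul_card_group]
  refine sum_congr rfl fun g _ => ?_
  rw [← Fintype.card_subtype]
  exact Fintype.card_congr ((Equiv.subtypeEquivRight fun S => Subtype.ext_iff).trans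
    (Equiv.subtypeSubtypeEquivSubtypeInter (#· = k) fun S => g • S = S))

theorem card_mul_sum_card_orbits_powersetCard [CommSemiring R] (w : ℕ → R) :
    (Fintype.card G : R) * ∑ k ∈ range (Fintype.card α + 1),
        Nat.card (orbitRel.Quotient G (Set.powersetCard α k)) * w k =
      ∑ g : G, ∑ S : Finset α with g • S = S, w #S := by
  have hmaps (g : G) :
      ∀ S ∈ ({S | g • S = S} : Finset (Finset α)), #S ∈ range (Fintype.card α + 1) :=
    fun S _ => mem_range_succ_iff.2 (card_le_univ S)
  simp_rw [← sum_fiberwise_of_maps_to' (hmaps _), mul_sum]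
  rw [sum_comm]
  refine sum_congr rfl fun k _ => ?_
  rw [← mul_assoc, mul_comm (Fintype.card G : R), ← Nat.cast_mul,
    card_orbits_powersetCard_mul_card, Nat.cast_sum, sum_mul]
  refine sum_congr rfl fun g _ => ?_
  rw [filter_filter, sum_const, nsmul_eq_mul]
  simp_rw [and_comm]

end Burnside

namespace DihedralGroup

variable {n : ℕ}

/-- With Mathlib's multiplication rules (`sr i * r j = sr (i + j)`), reflections acting by
`x ↦ i - x` force rotations to act by `x ↦ x - i`. -/
instance : MulAction (DihedralGroup n) (ZMod n) where
  smul
    | r i, x => x - i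
    | sr i, x => i - x
  one_smul _ := sub_zero _
  mul_smul := by
    rintro (i | i) (j | j) x <;>
    simp only [r_mul_r, r_mul_sr, sr_mul_r, sr_mul_sr, HSMul.hSMul] <;> ring

@[simp] theorem r_smul (i x : ZMod n) : r i • x = x - i := rfl

@[simp] theorem sr_smul (i x : ZMod n) : sr i • x = i - x := rfl

theorem sum_univ_eq_sum_r_add_sum_sr [NeZero n] {M : Type*} [AddCommMonoid M]
    (f : DihedralGroup n → M) : ∑ g, f g = ∑ i, f (r i) + ∑ i, f (sr i) := by
  rw [← equivSum.symm.sum_comp, Fintype.sum_sum_type]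
  rfl

theorem neckRel_iff {i : ℕ} (S T : Set.powersetCard (ZMod n) i) :
    neckRel n i S T ↔ ∃ g : DihedralGroup n, g • S = T := by
  simp only [neckRel, Subtype.ext_iff, Set.powersetCard.coe_smul, smul_finset_def]
  constructor
  · rintro ⟨a, h | h⟩
    · exact ⟨r (-a), by simpa using h⟩
    · exact ⟨sr a, by simpa using h⟩
  · rintro ⟨i | i, h⟩
    · exact ⟨-i, Or.inl (by simpa [← sub_eq_add_neg] using h)⟩
    · exact ⟨i, Or.inr (by simpa using h)⟩

theorem neck_eq_card_orbits (i : ℕ) :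
    neck n i = Nat.card (orbitRel.Quotient (DihedralGroup n) (Set.powersetCard (ZMod n) i)) :=
  Nat.card_congr <| Quot.congr (Equiv.refl _) fun S T =>
    (neckRel_iff S T).trans (mem_orbit_iff.symm.trans mem_orbit_symm)

end DihedralGroup

section Necklaces

variable {d : ℕ} [NeZero d] {R : Type*} [CommSemiring R]

theorem two_mul_sum_neck_mul_pow (x : R) :
    (2 * d : R) * ∑ i ∈ range (d + 1), neck d i * x ^ (d - i) =
      ∑ i : ZMod d, ∑ S with S.image (· - i) = S, x ^ #Sᶜ +
        ∑ i : ZMod d, ∑ S with S.image (i - ·) = S, x ^ #Sᶜ := by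
  have h := card_mul_sum_card_orbits_powersetCard (G := DihedralGroup d) (α := ZMod d)
    fun k => x ^ (d - k)
  simp only [DihedralGroup.card, ZMod.card, ← DihedralGroup.neck_eq_card_orbits,
    DihedralGroup.sum_univ_eq_sum_r_add_sum_sr, smul_finset_def, DihedralGroup.r_smul,
    DihedralGroup.sr_smul, Nat.cast_mul, Nat.cast_ofNat] at h
  simpa only [card_compl, ZMod.card] using h

theorem ZMod.sum_sum_image_sub_right_eq_self_pow_card_compl (x : R) :
    ∑ i : ZMod d, ∑ S with S.image (· - i) = S, x ^ #Sᶜ =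
      ∑ k ∈ d.divisors, (d / k).totient • (1 + x ^ (d / k)) ^ k := by
  have hrot (i : ZMod d) : ∑ S with S.image (· - i) = S, x ^ #Sᶜ =
      (1 + x ^ addOrderOf i) ^ (d / addOrderOf i) := by
    simpa [sub_eq_add_neg] using sum_image_add_right_eq_self_pow_card_compl (-i) x
  rw [sum_congr rfl fun i _ => hrot i,
    IsAddCyclic.sum_comp_addOrderOf fun m => (1 + x ^ m) ^ (d / m), ZMod.card,
    ← Nat.sum_div_divisors]
  exact sum_congr rfl fun k hk => by
    rw [Nat.div_div_self (Nat.dvd_of_mem_divisors hk) (NeZero.ne d)]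

theorem ZMod.sum_sum_image_sub_left_eq_self_pow_card_compl (heven : Even d) (x : R) :
    ∑ i : ZMod d, ∑ S with S.image (i - ·) = S, x ^ #Sᶜ =
      (d / 2) • ((1 + x) ^ 2 * (1 + x ^ 2) ^ ((d - 2) / 2) + (1 + x ^ 2) ^ (d / 2)) := by
  have hrefl (i : ZMod d) : ∑ S with S.image (i - ·) = S, x ^ #Sᶜ =
      (1 + x) ^ #{a : ZMod d | 2 • a = i} *
        (1 + x ^ 2) ^ ((d - #{a : ZMod d | 2 • a = i}) / 2) := by
    have hfix : #{a : ZMod d | i - a = a} = #{a : ZMod d | 2 • a = i} := by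
      refine congrArg Finset.card (filter_congr fun a _ => ?_)
      rw [sub_eq_iff_eq_add, two_nsmul, eq_comm]
    rw [Function.Involutive.sum_image_eq_self_pow_card_compl (σ := (i - ·)) (sub_sub_cancel i),
      hfix, ZMod.card]
  have h2 : 2 ∣ Fintype.card (ZMod d) := by rwa [ZMod.card, ← even_iff_two_dvd]
  rw [sum_congr rfl fun i _ => hrefl i,
    IsAddCyclic.sum_comp_card_two_nsmul_eq h2 fun m => (1 + x) ^ m * (1 + x ^ 2) ^ ((d - m) / 2),
    ZMod.card,
    pow_zero, one_mul, Nat.sub_zero]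

end Necklaces

theorem stmt1 (d : ℕ) (hd : 0 < d) (heven : Even d) :
    (4 * d : Polynomial ℤ) *
        ∑ i ∈ Finset.range (d + 1), (neck d i : Polynomial ℤ) * X ^ (2 * (d - i))
      = (d : Polynomial ℤ) * (1 + X ^ 2) ^ 2 * (1 + X ^ 4) ^ ((d - 2) / 2)
        + (d : Polynomial ℤ) * (1 + X ^ 4) ^ (d / 2)
        + 2 * ∑ k ∈ d.divisors,
            (Nat.totient (d / k) : Polynomial ℤ) * (1 + X ^ (2 * (d / k))) ^ k := by
  have : NeZero d := ⟨hd.ne'⟩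
  have h := two_mul_sum_neck_mul_pow (d := d) (X ^ 2 : ℤ[X])
  rw [ZMod.sum_sum_image_sub_right_eq_self_pow_card_compl,
    ZMod.sum_sum_image_sub_left_eq_self_pow_card_compl heven] at h
  simp only [← pow_mul, nsmul_eq_mul] at h
  have hhalf : ((d / 2 : ℕ) : ℤ[X]) * 2 = d := by
    exact_mod_cast Nat.div_mul_cancel (even_iff_two_dvd.1 heven)
  linear_combination 2 * h +
    ((1 + X ^ 2) ^ 2 * (1 + X ^ 4) ^ ((d - 2) / 2) + (1 + X ^ 4) ^ (d / 2)) * hhalf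
end

section
/- Let d be a positive integer and define the polynomial P_d(t) := Σ_{j=1}^{d} t^{2j} + Σ_{i=1}^{d} N(d,i) t^{2(d−i)} in ℤ[t] (this is the Poincaré polynomial of Q̄₁(G(1,1),d) computed in the paper). Then P_d is palindromic of degree 2d: for every 0 ≤ m ≤ 2d, the coefficient of t^m in P_d equals the coefficient of t^{2d−m}; moreover the coefficient of t^m vanishes for every odd m. In other words, t^{2d}·P_d(1/t) = P_d(t). -/
open Polynomial

/-!
Every exponent of `P_d` is even: `P_d(t) = Q(t²)` with
`Q = ∑_{j=1}^d t^j + ∑_{i=1}^d N(d,i) t^(d-i)`, so it suffices that `Q` is palindromic of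
degree `d`. For `0 < k < d` the coefficient of `t^k` in `Q` is `1 + N(d, d-k)`, and
`N(d, d-k) = N(d, k)` because taking complements (swapping black and white beads) commutes
with the dihedral action; the extreme coefficients are `N(d,d) = 1` and `1`.
-/

open Finset

section Palindromic

variable {R : Type*} [Semiring R]

def IsPalindromic (n : ℕ) (f : R[X]) : Prop := ∀ m ≤ n, f.coeff m = f.coeff (n - m)

lemma coeff_sum_Icc_X_pow (n k : ℕ) :
    (∑ j ∈ Icc 1 n, (X : R[X]) ^ j).coeff k = if 1 ≤ k ∧ k ≤ n then 1 else 0 := by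
  simp only [finsetSum_coeff, coeff_X_pow, sum_ite_eq, mem_Icc]

lemma coeff_sum_Icc_C_mul_X_pow_sub (n k : ℕ) (a : ℕ → R) :
    (∑ i ∈ Icc 1 n, C (a i) * X ^ (n - i)).coeff k = if k < n then a (n - k) else 0 := by
  simp only [finsetSum_coeff, coeff_C_mul_X_pow]
  split_ifs with hk
  · rw [sum_eq_single_of_mem (n - k) (mem_Icc.2 ⟨by omega, by omega⟩), if_pos (by omega)]
    intro i hi _
    rw [if_neg (by rw [mem_Icc] at hi; omega)]
  · exact sum_eq_zero fun i hi => if_neg (by rw [mem_Icc] at hi; omega)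

end Palindromic

section Expand

variable {R : Type*} [CommSemiring R] {p : ℕ}

lemma coeff_expand_eq_zero_of_not_dvd (hp : 0 < p) (f : R[X]) {m : ℕ} (hm : ¬ p ∣ m) :
    (expand R p f).coeff m = 0 := by
  rw [coeff_expand hp, if_neg hm]

lemma IsPalindromic.expand (hp : 0 < p) {n : ℕ} {f : R[X]} (hf : IsPalindromic n f) :
    IsPalindromic (p * n) (expand R p f) := by
  intro m hm
  by_cases hpm : p ∣ m
  · obtain ⟨k, rfl⟩ := hpm
    rw [← Nat.mul_sub, coeff_expand_mul' hp, coeff_expand_mul' hp]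
    exact hf k (le_of_mul_le_mul_left hm hp)
  · have hpm' : ¬ p ∣ p * n - m :=
      fun h => hpm ((Nat.dvd_sub_iff_right hm (dvd_mul_right p n)).mp h)
    rw [coeff_expand_eq_zero_of_not_dvd hp f hpm, coeff_expand_eq_zero_of_not_dvd hp f hpm']

end Expand

lemma Finset.image_equiv_compl {α : Type*} [Fintype α] [DecidableEq α] (e : α ≃ α)
    (S : Finset α) : (S.image e)ᶜ = Sᶜ.image e := by
  apply Finset.coe_injective
  push_cast
  exact (Set.image_compl_eq e.bijective).symm

lemma neckRel.compl {d : ℕ} [NeZero d] {i j : ℕ} {S T : {S : Finset (ZMod d) // S.card = i}}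
    (h : neckRel d i S T) (hS : S.1ᶜ.card = j) (hT : T.1ᶜ.card = j) :
    neckRel d j ⟨S.1ᶜ, hS⟩ ⟨T.1ᶜ, hT⟩ := by
  obtain ⟨a, h | h⟩ := h
  · refine ⟨a, Or.inl ?_⟩
    show _ = T.1ᶜ
    rw [← h]
    exact (S.1.image_equiv_compl (Equiv.addRight a)).symm
  · refine ⟨a, Or.inr ?_⟩
    show _ = T.1ᶜ
    rw [← h]
    exact (S.1.image_equiv_compl (Equiv.subLeft a)).symm

lemma neck_sub {d i : ℕ} (hi : i ≤ d) : neck d (d - i) = neck d i := by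
  rcases Nat.eq_zero_or_pos d with rfl | hd
  · obtain rfl : i = 0 := by omega
    rfl
  have : NeZero d := ⟨hd.ne'⟩
  have card_compl_eq {k : ℕ} (S : {S : Finset (ZMod d) // S.card = k}) :
      S.1ᶜ.card = d - k := by
    rw [card_compl, S.2, ZMod.card]
  let e : Quot (neckRel d (d - i)) ≃ Quot (neckRel d i) :=
    { toFun := Quot.map (fun S => ⟨S.1ᶜ, by rw [card_compl_eq S, Nat.sub_sub_self hi]⟩)
        fun _ _ h => h.compl _ _
      invFun := Quot.map (fun S => ⟨S.1ᶜ, card_compl_eq S⟩) fun _ _ h => h.compl _ _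
      left_inv := fun q => Quot.inductionOn q fun S => by simp [Quot.map]
      right_inv := fun q => Quot.inductionOn q fun S => by simp [Quot.map] }
  exact Nat.card_congr e

lemma neck_zero (d : ℕ) : neck d 0 = 1 := by
  have : Subsingleton {S : Finset (ZMod d) // S.card = 0} :=
    ⟨fun S T => Subtype.ext <| by rw [card_eq_zero.1 S.2, card_eq_zero.1 T.2]⟩
  have : Subsingleton (Quot (neckRel d 0)) := Quot.Subsingleton
  have : Nonempty (Quot (neckRel d 0)) := ⟨Quot.mk _ ⟨∅, card_empty⟩⟩
  exact Nat.card_unique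

lemma neck_self (d : ℕ) : neck d d = 1 := by
  rw [← neck_sub le_rfl, Nat.sub_self, neck_zero]

noncomputable def reducedPoincare (d : ℕ) : ℤ[X] :=
  ∑ j ∈ Icc 1 d, X ^ j + ∑ i ∈ Icc 1 d, (neck d i : ℤ[X]) * X ^ (d - i)

lemma expand_reducedPoincare (d : ℕ) : expand ℤ 2 (reducedPoincare d) =
    ∑ j ∈ Icc 1 d, X ^ (2 * j) + ∑ i ∈ Icc 1 d, (neck d i : ℤ[X]) * X ^ (2 * (d - i)) := by
  simp [reducedPoincare, pow_mul]

lemma coeff_reducedPoincare (d k : ℕ) : (reducedPoincare d).coeff k =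
    (if 1 ≤ k ∧ k ≤ d then 1 else 0) + (if k < d then (neck d (d - k) : ℤ) else 0) := by
  simp only [reducedPoincare, coeff_add, coeff_sum_Icc_X_pow, ← map_natCast C,
    coeff_sum_Icc_C_mul_X_pow_sub]

lemma isPalindromic_reducedPoincare (d : ℕ) : IsPalindromic d (reducedPoincare d) := by
  intro k hk
  simp only [coeff_reducedPoincare, Nat.sub_sub_self hk]
  rcases Nat.eq_zero_or_pos k with rfl | hk0
  · simp [neck_self, Nat.one_le_iff_ne_zero, Nat.pos_iff_ne_zero]
  rcases hk.eq_or_lt with rfl | hkd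
  · simp [neck_self, Nat.one_le_iff_ne_zero, Nat.pos_iff_ne_zero]
  rw [if_pos ⟨hk0, hk⟩, if_pos hkd, if_pos ⟨by omega, Nat.sub_le d k⟩, if_pos (by omega),
    neck_sub hk]

lemma natDegree_reducedPoincare {d : ℕ} (hd : 0 < d) : (reducedPoincare d).natDegree = d := by
  refine natDegree_eq_of_le_of_coeff_ne_zero (natDegree_le_iff_coeff_eq_zero.2 fun k hk => ?_) ?_
  · rw [coeff_reducedPoincare, if_neg (by omega), if_neg (by omega), add_zero]
  · rw [coeff_reducedPoincare, if_pos ⟨hd, le_rfl⟩, if_neg (lt_irrefl d)]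
    exact one_ne_zero

theorem stmt6 (d : ℕ) (hd : 0 < d) (P : Polynomial ℤ)
    (hP : P = ∑ j ∈ Finset.Icc 1 d, X ^ (2 * j)
        + ∑ i ∈ Finset.Icc 1 d, (neck d i : Polynomial ℤ) * X ^ (2 * (d - i))) :
    P.natDegree = 2 * d
      ∧ (∀ m ≤ 2 * d, P.coeff m = P.coeff (2 * d - m))
      ∧ (∀ m, Odd m → P.coeff m = 0) := by
  rw [hP, ← expand_reducedPoincare]
  refine ⟨?_, (isPalindromic_reducedPoincare d).expand two_pos, fun m hm => ?_⟩
  · rw [natDegree_expand, natDegree_reducedPoincare hd, mul_comm]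
  · exact coeff_expand_eq_zero_of_not_dvd two_pos _ (by rwa [← even_iff_two_dvd, Nat.not_even_iff_odd])
end

section
/- Let d be a positive integer and 1 ≤ i ≤ d. The number of orbits of the dihedral group of order 2i, acting by precomposition with the rotations x ↦ x + a and reflections x ↦ a − x of ZMod i, on the set of functions f : ZMod i → ℕ with f(j) ≥ 1 for all j and Σ_{j ∈ ZMod i} f(j) = d, equals N(d,i). (This is the paper's bijection between the substrata Δ_d^{(d_1,...,d_i)} of the boundary stratum Δ_d^i of Q̄₁(G(1,1),d) — i.e., decorated i-gons with positive labels summing to d, up to dihedral symmetry — and necklaces of i black and d−i white beads, obtained by placing one black bead at each vertex and d_j − 1 white beads on the j-th edge.) -/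
open Polynomial

/-- The orbit relation of the dihedral group of order `2i` acting by precomposition with
rotations `x ↦ x + a` and reflections `x ↦ a - x` of `ZMod i` on functions
`f : ZMod i → ℕ` with `f j ≥ 1` for all `j` and `∑ j, f j = d` (decorated `i`-gons). -/
def polyRel (d i : ℕ) [NeZero i]
    (f g : {f : ZMod i → ℕ // (∀ j, 1 ≤ f j) ∧ ∑ j, f j = d}) : Prop :=
  ∃ a : ZMod i, (∀ x, f.1 (x + a) = g.1 x) ∨ (∀ x, f.1 (a - x) = g.1 x)


/-! Label the edges of the `i`-gon by `f 0, …, f (i-1)` and put black beads at the partial sums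
`0 = s₀ < s₁ < ⋯ < s_{i-1} < d` in `ZMod d`. Since the labels are the gaps between consecutive
beads, this identifies decorated `i`-gons with `i`-subsets of `ZMod d` containing `0`. Rotating
the polygon by `a` translates the beads by `-s_a`, and the reflection `x ↦ a - x` sends the bead
set `S` to `s_{a+1} - S`. Conversely, a dihedral motion carrying one bead set onto another must
move some bead to `0`, so it is one of these. Hence `f ↦ beads` induces a bijection on orbits. -/

open Finset

section PartialSum

variable {M : Type*} [AddCommMonoid M] {i : ℕ}

def partialSum (f : ZMod i → M) (n : ℕ) : M := ∑ k ∈ range n, f k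

lemma partialSum_zero (f : ZMod i → M) : partialSum f 0 = 0 := sum_range_zero _

lemma partialSum_succ (f : ZMod i → M) (n : ℕ) : partialSum f (n + 1) = partialSum f n + f n :=
  sum_range_succ _ _

lemma partialSum_add (f : ZMod i → M) (m k : ℕ) :
    partialSum f (m + k) = partialSum f m + partialSum (fun x : ZMod i => f (x + m)) k := by
  simp only [partialSum, sum_range_add, Nat.cast_add, add_comm (m : ZMod i)]

lemma partialSum_eq_sub_add_reflect (f : ZMod i → M) {k n : ℕ} (hk : k ≤ n) :
    partialSum f n = partialSum f (n - k) + partialSum (fun x : ZMod i => f (n - 1 - x)) k := by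
  obtain ⟨m, rfl⟩ := Nat.exists_eq_add_of_le' hk
  rw [Nat.add_sub_cancel, partialSum_add, partialSum, partialSum,
    ← sum_range_reflect (fun j : ℕ => f (j + m)) k]
  refine congrArg _ (sum_congr rfl fun j hj => congrArg f ?_)
  have hj : j < k := mem_range.1 hj
  rw [Nat.cast_sub (by omega), Nat.cast_sub (by omega)]
  push_cast
  ring

variable [NeZero i]

lemma partialSum_period (f : ZMod i → M) : partialSum f i = ∑ x, f x := by
  refine sum_nbij' (fun k => k) ZMod.val (fun _ _ => mem_univ _)
    (fun x _ => mem_range.2 x.val_lt) (fun k hk => ZMod.val_cast_of_lt (mem_range.1 hk))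
    (fun x _ => ZMod.natCast_zmod_val x) fun _ _ => rfl

lemma partialSum_add_period (f : ZMod i → M) (n : ℕ) :
    partialSum f (n + i) = partialSum f n + ∑ x, f x := by
  rw [partialSum_add, partialSum_period]
  exact congrArg _ (Equiv.sum_comp (Equiv.addRight (n : ZMod i)) f)

lemma partialSum_add_mul_period (f : ZMod i → M) (n t : ℕ) :
    partialSum f (n + i * t) = partialSum f n + t • ∑ x, f x := by
  induction t with
  | zero => simp
  | succ t ih => rw [Nat.mul_succ, ← add_assoc, partialSum_add_period, ih, succ_nsmul, add_assoc]

end PartialSum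

section BlackBeads

variable {d i : ℕ} {f g : ZMod i → ℕ}

lemma partialSum_strictMono (hf : ∀ j, 1 ≤ f j) : StrictMono (partialSum f) :=
  strictMono_nat_of_lt_succ fun n => by rw [partialSum_succ]; have := hf n; omega

variable [NeZero i]

lemma partialSum_lt (hf : ∀ j, 1 ≤ f j) (hsum : ∑ j, f j = d) {j : ℕ} (hj : j < i) :
    partialSum f j < d :=
  (partialSum_strictMono hf hj).trans_eq (by rw [partialSum_period, hsum])

def blackBeads (d : ℕ) (f : ZMod i → ℕ) : Finset (ZMod d) :=
  (range i).image fun j => ((partialSum f j : ℕ) : ZMod d)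

lemma zero_mem_blackBeads : (0 : ZMod d) ∈ blackBeads d f :=
  mem_image.2 ⟨0, mem_range.2 (NeZero.pos i), by simp [partialSum_zero]⟩

lemma natCast_partialSum_mem_blackBeads (hsum : ∑ j, f j = d) (n : ℕ) :
    ((partialSum f n : ℕ) : ZMod d) ∈ blackBeads d f := by
  refine mem_image.2 ⟨n % i, mem_range.2 (Nat.mod_lt n (NeZero.pos i)), ?_⟩
  conv_rhs => rw [← Nat.mod_add_div n i, partialSum_add_mul_period, hsum]
  simp

lemma range_partialSum (hf : ∀ j, 1 ≤ f j) (hsum : ∑ j, f j = d) :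
    Set.range (partialSum f) = {m : ℕ | (m : ZMod d) ∈ blackBeads d f} := by
  ext m
  refine ⟨by rintro ⟨n, rfl⟩; exact natCast_partialSum_mem_blackBeads hsum n,
    fun (hm : (m : ZMod d) ∈ blackBeads d f) => ?_⟩
  obtain ⟨j, hj, hjm⟩ := mem_image.1 hm
  have hlt := partialSum_lt hf hsum (mem_range.1 hj)
  have hmod : m % d = partialSum f j := by
    rw [← Nat.mod_eq_of_lt hlt, ← ZMod.natCast_eq_natCast_iff', hjm]
  refine ⟨j + i * (m / d), ?_⟩
  rw [partialSum_add_mul_period, hsum, ← hmod, smul_eq_mul, mul_comm, Nat.mod_add_div]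

lemma card_blackBeads (hf : ∀ j, 1 ≤ f j) (hsum : ∑ j, f j = d) :
    (blackBeads d f).card = i := by
  rw [blackBeads, card_image_of_injOn, card_range]
  intro j hj k hk hjk
  have hval := congrArg ZMod.val hjk
  simp only [ZMod.val_cast_of_lt (partialSum_lt hf hsum (mem_range.1 hj)),
    ZMod.val_cast_of_lt (partialSum_lt hf hsum (mem_range.1 hk))] at hval
  exact (partialSum_strictMono hf).injective hval

lemma eq_of_blackBeads_eq (hf : ∀ j, 1 ≤ f j) (hsum : ∑ j, f j = d) (hg : ∀ j, 1 ≤ g j)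
    (hgsum : ∑ j, g j = d) (h : blackBeads d f = blackBeads d g) : f = g := by
  have hP : partialSum f = partialSum g := by
    rw [← (partialSum_strictMono hf).range_inj (partialSum_strictMono hg),
      range_partialSum hf hsum, range_partialSum hg hgsum, h]
  funext x
  have hsucc := congrFun hP (x.val + 1)
  rw [partialSum_succ, partialSum_succ, congrFun hP x.val, ZMod.natCast_zmod_val] at hsucc
  exact Nat.add_left_cancel hsucc

end BlackBeads

section Surjectivity

variable {i : ℕ} [NeZero i]

lemma exists_image_range_partialSum_eq {N : Finset ℕ} (hN : N.card = i + 1) (h0 : 0 ∈ N) :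
    ∃ f : ZMod i → ℕ, (∀ j, 1 ≤ f j) ∧ (range (i + 1)).image (partialSum f) = N := by
  set e := N.orderEmbOfFin hN
  -- `N` in increasing order, clamped at index `i` so that `u` is monotone on all of `ℕ`
  set u : ℕ → ℕ := fun j => e ⟨min j i, by omega⟩ with hu
  have hu_strict : StrictMonoOn u (Set.Iic i) := fun j hj k hk hjk =>
    e.strictMono (Fin.mk_lt_mk.2 (by simp only [Set.mem_Iic] at hj hk; omega))
  have hu_mono : Monotone u := fun j k hjk => e.monotone (Fin.mk_le_mk.2 (by omega))
  have hu_zero : u 0 = 0 := by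
    have hmin : u 0 = N.min' ⟨0, h0⟩ := by
      simpa [hu] using orderEmbOfFin_zero hN (Nat.succ_pos i)
    exact Nat.le_zero.1 (hmin ▸ min'_le N 0 h0)
  set f : ZMod i → ℕ := fun x => u (x.val + 1) - u x.val with hfu
  have hP : ∀ j ≤ i, partialSum f j = u j := by
    intro j hj
    induction j with
    | zero => rw [partialSum_zero, hu_zero]
    | succ j ih =>
      have hj' : j < i := hj
      rw [partialSum_succ, ih hj'.le, hfu]
      simp only [ZMod.val_cast_of_lt hj']
      have := hu_mono (Nat.le_add_right j 1)
      omega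
  refine ⟨f, fun x => ?_, ?_⟩
  · have : u x.val < u (x.val + 1) :=
      hu_strict (Set.mem_Iic.2 x.val_lt.le) (Set.mem_Iic.2 x.val_lt) (Nat.lt_add_one _)
    simp only [hfu]
    omega
  · rw [image_congr fun j hj => hP j (Nat.lt_succ_iff.1 (mem_range.1 hj))]
    refine eq_of_subset_of_card_le (fun x hx => ?_) ?_
    · obtain ⟨j, -, rfl⟩ := mem_image.1 hx
      exact orderEmbOfFin_mem N hN _
    · rw [hN, card_image_of_injOn, card_range]
      refine hu_strict.injOn.mono fun j hj => ?_
      simp only [coe_range, Set.mem_Iio, Set.mem_Iic] at hj ⊢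
      omega

lemma exists_blackBeads_eq {d : ℕ} (hi : i ≤ d) {S : Finset (ZMod d)} (hS : S.card = i)
    (h0 : 0 ∈ S) :
    ∃ f : ZMod i → ℕ, (∀ j, 1 ≤ f j) ∧ ∑ j, f j = d ∧ blackBeads d f = S := by
  have : NeZero d := ⟨by have := NeZero.ne i; omega⟩
  set V := S.image ZMod.val
  have hV : ∀ v ∈ V, v < d := by
    intro v hv
    obtain ⟨x, -, rfl⟩ := mem_image.1 hv
    exact x.val_lt
  have hdV : d ∉ V := fun h => (hV d h).false
  obtain ⟨f, hf, himage⟩ := exists_image_range_partialSum_eq (N := insert d V)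
    (by rw [card_insert_of_notMem hdV, card_image_of_injective _ (ZMod.val_injective d), hS])
    (mem_insert_of_mem (mem_image.2 ⟨0, h0, ZMod.val_zero⟩))
  have hsum : ∑ j, f j = d := by
    rw [← partialSum_period]
    apply le_antisymm
    · have hmem : partialSum f i ∈ insert d V :=
        himage ▸ mem_image_of_mem _ (self_mem_range_succ i)
      rcases mem_insert.1 hmem with h | h
      · exact h.le
      · exact (hV _ h).le
    · obtain ⟨j, hj, hjd⟩ := mem_image.1 (himage ▸ mem_insert_self d V)
      exact hjd ▸ (partialSum_strictMono hf).monotone (Nat.lt_succ_iff.1 (mem_range.1 hj))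
  refine ⟨f, hf, hsum, ?_⟩
  have hvals : (range i).image (partialSum f) = V := by
    have hd : d ∉ (range i).image (partialSum f) := fun h => by
      obtain ⟨j, hj, hjd⟩ := mem_image.1 h
      exact (partialSum_lt hf hsum (mem_range.1 hj)).ne hjd
    rw [← erase_insert hdV, ← himage, range_add_one, image_insert, partialSum_period, hsum,
      erase_insert hd]
  change (range i).image (Nat.cast ∘ partialSum f) = S
  rw [← image_image, hvals, image_image]
  simp [Function.comp_def]

end Surjectivity

lemma neckRel_equivalence (d i : ℕ) : Equivalence (neckRel d i) where
  refl S := ⟨0, Or.inl (by simp)⟩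
  symm := by
    rintro S ⟨T, _⟩ ⟨a, rfl | rfl⟩
    · exact ⟨-a, Or.inl <| by
        simp only [image_image, Function.comp_def, add_neg_cancel_right, image_id']⟩
    · exact ⟨a, Or.inr <| by
        simp only [image_image, Function.comp_def, sub_sub_cancel, image_id']⟩
  trans := by
    rintro S ⟨T, _⟩ ⟨U, _⟩ ⟨a, rfl | rfl⟩ ⟨b, rfl | rfl⟩ <;>
      simp only [image_image, Function.comp_def]
    · exact ⟨a + b, Or.inl (image_congr fun x _ => by ring)⟩
    · exact ⟨b - a, Or.inr (image_congr fun x _ => by ring)⟩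
    · exact ⟨a + b, Or.inr (image_congr fun x _ => by ring)⟩
    · exact ⟨b - a, Or.inl (image_congr fun x _ => by ring)⟩

abbrev CyclicComposition (d i : ℕ) [NeZero i] :=
  {f : ZMod i → ℕ // (∀ j, 1 ≤ f j) ∧ ∑ j, f j = d}

namespace CyclicComposition

variable {d i : ℕ} [NeZero i]

def rotate (f : CyclicComposition d i) (a : ZMod i) : CyclicComposition d i :=
  ⟨fun x => f.1 (x + a), fun _ => f.2.1 _, (Equiv.sum_comp (Equiv.addRight a) f.1).trans f.2.2⟩

def reflect (f : CyclicComposition d i) (a : ZMod i) : CyclicComposition d i :=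
  ⟨fun x => f.1 (a - x), fun _ => f.2.1 _, (Equiv.sum_comp (Equiv.subLeft a) f.1).trans f.2.2⟩

def necklace (f : CyclicComposition d i) : {S : Finset (ZMod d) // S.card = i} :=
  ⟨blackBeads d f.1, card_blackBeads f.2.1 f.2.2⟩

lemma necklace_injective : Function.Injective (necklace : CyclicComposition d i → _) :=
  fun f g h => Subtype.ext (eq_of_blackBeads_eq f.2.1 f.2.2 g.2.1 g.2.2 (congrArg Subtype.val h))

lemma necklace_rotate (f : CyclicComposition d i) (n : ℕ) :
    (f.rotate n).necklace.1 =
      f.necklace.1.image fun x => x - ((partialSum f.1 n : ℕ) : ZMod d) := by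
  refine eq_of_subset_of_card_le (fun x hx => ?_) ?_
  · obtain ⟨k, -, rfl⟩ := mem_image.1 hx
    dsimp only [rotate]
    refine mem_image.2 ⟨_, natCast_partialSum_mem_blackBeads f.2.2 (n + k), ?_⟩
    rw [partialSum_add]
    push_cast
    ring
  · rw [(f.rotate n).necklace.2]
    exact card_image_le.trans_eq f.necklace.2

lemma necklace_reflect (f : CyclicComposition d i) (n : ℕ) :
    (f.reflect (n - 1)).necklace.1 =
      f.necklace.1.image fun x => ((partialSum f.1 n : ℕ) : ZMod d) - x := by
  refine eq_of_subset_of_card_le (fun x hx => ?_) ?_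
  · obtain ⟨k, -, rfl⟩ := mem_image.1 hx
    dsimp only [reflect]
    -- Shifting `n` by `i * k`, invisible in `ZMod i` and (after casting) in `ZMod d`,
    -- makes room for the truncated subtraction `n - k`.
    have hk : k ≤ n + i * k := le_add_left (Nat.le_mul_of_pos_left k (NeZero.pos i))
    refine mem_image.2 ⟨_, natCast_partialSum_mem_blackBeads f.2.2 (n + i * k - k), ?_⟩
    have hsplit := congrArg (Nat.cast : ℕ → ZMod d) (partialSum_eq_sub_add_reflect f.1 hk)
    rw [partialSum_add_mul_period, f.2.2, show ((n + i * k : ℕ) : ZMod i) = n by simp] at hsplit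
    push_cast [smul_eq_mul, ZMod.natCast_self, mul_zero] at hsplit
    linear_combination hsplit
  · rw [(f.reflect _).necklace.2]
    exact card_image_le.trans_eq f.necklace.2

lemma neckRel_necklace_of_polyRel {f g : CyclicComposition d i} (h : polyRel d i f g) :
    neckRel d i f.necklace g.necklace := by
  obtain ⟨a, hrot | hrefl⟩ := h
  · obtain rfl : f.rotate a = g := Subtype.ext (funext hrot)
    obtain ⟨n, rfl⟩ := ZMod.natCast_zmod_surjective a
    refine ⟨-((partialSum f.1 n : ℕ) : ZMod d), Or.inl ?_⟩
    rw [necklace_rotate]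
    simp_rw [sub_eq_add_neg]
  · obtain rfl : f.reflect a = g := Subtype.ext (funext hrefl)
    obtain ⟨n, hn⟩ := ZMod.natCast_zmod_surjective (a + 1)
    obtain rfl : a = n - 1 := by rw [hn, add_sub_cancel_right]
    exact ⟨_, Or.inr (necklace_reflect f n).symm⟩

lemma polyRel_of_neckRel_necklace {f g : CyclicComposition d i}
    (h : neckRel d i f.necklace g.necklace) : polyRel d i f g := by
  have h0 : (0 : ZMod d) ∈ g.necklace.1 := zero_mem_blackBeads
  obtain ⟨b, hrot | hrefl⟩ := h
  · obtain ⟨y, hy, hyb⟩ := mem_image.1 (hrot ▸ h0)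
    obtain ⟨j, -, rfl⟩ := mem_image.1 hy
    have hg : f.rotate j = g := necklace_injective <| Subtype.ext <| by
      rw [necklace_rotate, ← hrot, eq_neg_of_add_eq_zero_right hyb]
      simp_rw [sub_eq_add_neg]
    exact ⟨j, Or.inl fun x => congrFun (congrArg Subtype.val hg) x⟩
  · obtain ⟨y, hy, hyb⟩ := mem_image.1 (hrefl ▸ h0)
    obtain ⟨j, -, rfl⟩ := mem_image.1 hy
    have hg : f.reflect (j - 1) = g := necklace_injective <| Subtype.ext <| by
      rw [necklace_reflect, ← hrefl, sub_eq_zero.1 hyb]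
    exact ⟨j - 1, Or.inr fun x => congrFun (congrArg Subtype.val hg) x⟩

lemma exists_neckRel_necklace (hi : i ≤ d) (S : {S : Finset (ZMod d) // S.card = i}) :
    ∃ f : CyclicComposition d i, neckRel d i f.necklace S := by
  obtain ⟨m, hm⟩ := card_pos.1 (S.2 ▸ NeZero.pos i)
  obtain ⟨f, hf, hsum, hbeads⟩ := exists_blackBeads_eq hi (S := S.1.image (· - m))
    ((card_image_of_injective _ (sub_left_injective)).trans S.2)
    (mem_image.2 ⟨m, hm, sub_self m⟩)
  refine ⟨⟨f, hf, hsum⟩, m, Or.inl ?_⟩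
  change (blackBeads d f).image _ = _
  simp [hbeads, image_image, Function.comp_def]

end CyclicComposition

theorem stmt7_general (d i : ℕ) [NeZero i] (hi : i ≤ d) :
    Nat.card (Quot (polyRel d i)) = neck d i := by
  refine Nat.card_congr <| Equiv.ofBijective
    (Quot.lift (fun f => Quot.mk _ (CyclicComposition.necklace f))
      fun _ _ h => Quot.sound (CyclicComposition.neckRel_necklace_of_polyRel h)) ⟨?_, ?_⟩
  · rintro ⟨f⟩ ⟨g⟩ h
    exact Quot.sound (CyclicComposition.polyRel_of_neckRel_necklace
      ((neckRel_equivalence d i).eqvGen_iff.1 (Quot.eq.1 h)))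
  · rintro ⟨S⟩
    obtain ⟨f, hf⟩ := CyclicComposition.exists_neckRel_necklace hi S
    exact ⟨Quot.mk _ f, Quot.sound hf⟩

theorem stmt7 (d i : ℕ) [NeZero i] (hd : 0 < d) (h1 : 1 ≤ i) (hi : i ≤ d) :
    Nat.card (Quot (polyRel d i)) = neck d i :=
  stmt7_general d i hi
end
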